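/- arXiv:1505.02689 — 2 statements merged into one kernel-verified Lean document; each statement's English description precedes it below -/
import Mathlib

section
/- Let (Ω, 𝓕, P) be a probability space, A ∈ 𝓕 an event with P(A) > 0, and A₁, …, A_N ∈ 𝓕 a partition of A into N pairwise disjoint measurable sets with P(A_k) = P(A)/N for every k. Let g : Ω → ℝ be square-integrable with respect to each conditional measure P(·|A_k) and with respect to P(·|A). Suppose ξ₁, …, ξ_N are i.i.d. Ω-valued random variables with common law P(·|A) and η₁, …, η_N are independent Ω-valued random variables with η_k distributed according to P(·|A_k). Then Var[(P(A)/N) · Σ_{k=1}^N g(η_k)] ≤ Var[(P(A)/N) · Σ_{j=1}^N g(ξ_j)]; that is, the estimator obtained by drawing one sample from each of the N equal-probability substrata of A never has larger variance than the estimator obtained by drawing N samples from A itself. -/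
/-!
Both estimators are sums of independent terms, so their variances are `(P A / N)²` times
`N · Var[g | A]` and `∑ₖ Var[g | Aₖ]` respectively. Since `P[|A]` is the uniform mixture of the
`P[|Aₖ]`, the variance of `g` given `A` is `∫ (g - m)² ∂P[|A]`, with `m` the mean of `g` given `A`,
which is the average of the `∫ (g - m)² ∂P[|Aₖ]`; each of these is at least `Var[g | Aₖ]`, as the
mean minimises the mean squared deviation.
-/

open MeasureTheory ProbabilityTheory
open scoped ENNReal ProbabilityTheory

namespace ProbabilityTheory

variable {Ω : Type*} [MeasurableSpace Ω]

lemma measure_smul_cond (μ : Measure Ω) [IsFiniteMeasure μ] (s : Set Ω) :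
    μ s • μ[|s] = μ.restrict s := by
  rcases eq_or_ne (μ s) 0 with hs | hs
  · simp [hs, Measure.restrict_eq_zero.mpr hs]
  · rw [cond, smul_smul, ENNReal.mul_inv_cancel hs (measure_ne_top μ s), one_smul]

lemma cond_iUnion_eq_sum_smul_cond {ι : Type*} [Fintype ι] (μ : Measure Ω) [IsFiniteMeasure μ]
    {s : ι → Set Ω} (hs : ∀ k, MeasurableSet (s k)) (hdisj : Pairwise (Function.onFun Disjoint s)) :
    μ[|⋃ k, s k] = ∑ k, ((μ (⋃ k, s k))⁻¹ * μ (s k)) • μ[|s k] := by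
  simp_rw [← smul_smul, ← Finset.smul_sum, measure_smul_cond, ← Measure.sum_fintype,
    ← Measure.restrict_iUnion hdisj hs, cond]

lemma cond_eq_sum_inv_natCast_smul_cond (P : Measure Ω) [IsFiniteMeasure P] {A : Set Ω}
    (hA : P A ≠ 0) {N : ℕ} {As : Fin N → Set Ω} (hAsMeas : ∀ k, MeasurableSet (As k))
    (hAsDisj : Pairwise (Function.onFun Disjoint As)) (hAsUnion : (⋃ k, As k) = A)
    (hAsProb : ∀ k, P (As k) = P A / (N : ℝ≥0∞)) :
    P[|A] = ∑ k, (N : ℝ≥0∞)⁻¹ • P[|As k] := by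
  rw [← hAsUnion, cond_iUnion_eq_sum_smul_cond P hAsMeas hAsDisj, hAsUnion]
  refine Finset.sum_congr rfl fun k _ => ?_
  rw [hAsProb k, ← mul_div_assoc, ENNReal.inv_mul_cancel hA (measure_ne_top P A), one_div]

lemma variance_le_integral_sub_sq {μ : Measure Ω} [IsProbabilityMeasure μ] {X : Ω → ℝ}
    (hX : AEStronglyMeasurable X μ) (c : ℝ) : Var[X; μ] ≤ ∫ ω, (X ω - c) ^ 2 ∂μ := by
  rw [← variance_sub_const hX c]
  exact variance_le_expectation_sq (hX.sub aestronglyMeasurable_const)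

lemma sum_mul_variance_le_variance_sum_smul {ι : Type*} [Fintype ι] {ν : ι → Measure Ω}
    [∀ k, IsProbabilityMeasure (ν k)] {w : ι → ℝ≥0∞} (hw : ∀ k, w k ≠ ∞) {X : Ω → ℝ}
    (hX : ∀ k, MemLp X 2 (ν k)) :
    ∑ k, (w k).toReal * Var[X; ν k] ≤ Var[X; ∑ k, w k • ν k] := by
  set m := (∑ k, w k • ν k)[X]
  have hXm : AEMeasurable X (∑ k, w k • ν k) := by
    rw [← Measure.sum_fintype, aemeasurable_sum_measure_iff]
    exact fun k => (hX k).aemeasurable.smul_measure _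
  have hint : ∀ k, Integrable (fun ω => (X ω - m) ^ 2) (w k • ν k) := fun k =>
    ((hX k).sub (memLp_const m)).integrable_sq.smul_measure (hw k)
  calc ∑ k, (w k).toReal * Var[X; ν k]
      ≤ ∑ k, (w k).toReal * ∫ ω, (X ω - m) ^ 2 ∂ν k := by
        gcongr with k
        exact variance_le_integral_sub_sq (hX k).aestronglyMeasurable m
    _ = Var[X; ∑ k, w k • ν k] := by
        rw [variance_eq_integral hXm, integral_finsetSum_measure fun k _ => hint k]
        simp_rw [integral_smul_measure, smul_eq_mul]

variable {Ω' : Type*} [MeasurableSpace Ω']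

lemma iIndepFun.variance_sum_comp {ι : Type*} [Fintype ι] {P : Measure Ω'}
    {η : ι → Ω' → Ω} {μ : ι → Measure Ω} (hη : ∀ i, MeasurePreserving (η i) P (μ i))
    (hind : iIndepFun η P) {f : ι → Ω → ℝ} (hf : ∀ i, MemLp (f i) 2 (μ i)) :
    Var[fun ω => ∑ i, f i (η i ω); P] = ∑ i, Var[f i; μ i] := by
  have hcomp : iIndepFun (fun i => f i ∘ η i) P :=
    hind.comp₀ f (fun i => (hη i).aemeasurable)
      (fun i => (hη i).map_eq ▸ (hf i).aemeasurable)
  rw [← Finset.sum_fn]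
  change Var[∑ i, f i ∘ η i; P] = _
  rw [IndepFun.variance_sum (fun i _ => (hf i).comp_measurePreserving (hη i))
    fun i _ j _ hij => hcomp.indepFun hij]
  exact Finset.sum_congr rfl fun i _ => (hη i).variance_fun_comp (hf i).aemeasurable

end ProbabilityTheory

theorem refined_stratification_variance_le_general
    {Ω Ω' : Type*} [MeasurableSpace Ω] [MeasurableSpace Ω']
    (P : Measure Ω) [IsProbabilityMeasure P]
    (P' : Measure Ω') [IsProbabilityMeasure P']
    (A : Set Ω) (hApos : 0 < P A)
    (N : ℕ) (hN : 0 < N)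
    (As : Fin N → Set Ω) (hAsMeas : ∀ k, MeasurableSet (As k))
    (hAsDisj : Pairwise (Function.onFun Disjoint As))
    (hAsUnion : (⋃ k, As k) = A)
    (hAsProb : ∀ k, P (As k) = P A / (N : ℝ≥0∞))
    (g : Ω → ℝ)
    (hgA : MemLp g 2 (P[|A])) (hgAs : ∀ k, MemLp g 2 (P[|As k]))
    (ξ η : Fin N → Ω' → Ω)
    (hξMeas : ∀ j, Measurable (ξ j)) (hηMeas : ∀ k, Measurable (η k))
    (hξLaw : ∀ j, Measure.map (ξ j) P' = P[|A])
    (hηLaw : ∀ k, Measure.map (η k) P' = P[|As k])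
    (hξIndep : iIndepFun ξ P')
    (hηIndep : iIndepFun η P') :
    variance (fun ω => (P A).toReal / (N : ℝ) * ∑ k, g (η k ω)) P' ≤
      variance (fun ω => (P A).toReal / (N : ℝ) * ∑ j, g (ξ j ω)) P' := by
  have (k : Fin N) : IsProbabilityMeasure (P[|As k]) :=
    cond_isProbabilityMeasure (by simp [hAsProb k, hApos.ne'])
  have hmix : ∑ k, Var[g; P[|As k]] ≤ N * Var[g; P[|A]] := by
    have := sum_mul_variance_le_variance_sum_smul (w := fun _ => (N : ℝ≥0∞)⁻¹)
      (fun _ => by simpa using hN.ne') hgAs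
    rwa [← cond_eq_sum_inv_natCast_smul_cond P hApos.ne' hAsMeas hAsDisj hAsUnion hAsProb,
      ← Finset.mul_sum, ENNReal.toReal_inv, ENNReal.toReal_natCast,
      inv_mul_le_iff₀ (by exact_mod_cast hN)] at this
  rw [variance_const_mul, variance_const_mul,
    iIndepFun.variance_sum_comp (fun k => ⟨hηMeas k, hηLaw k⟩) hηIndep (f := fun _ => g) hgAs,
    iIndepFun.variance_sum_comp (fun j => ⟨hξMeas j, hξLaw j⟩) hξIndep (f := fun _ => g)
      fun _ => hgA, Finset.sum_const, Finset.card_univ, Fintype.card_fin, nsmul_eq_mul]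
  exact mul_le_mul_of_nonneg_left hmix (sq_nonneg _)

/-- **Theorem 1 (balanced stratum refinement reduces variance).**
Given an event `A` with `P A > 0`, partitioned into `N` pairwise disjoint measurable
substrata `As k` each of probability `P A / N`, and a square-integrable function `g`,
the stratified estimator drawing one sample from each substratum (via the independent
random variables `η k` with laws `P[|As k]`) never has larger variance than the
estimator drawing `N` i.i.d. samples from `A` itself (via `ξ j` with law `P[|A]`). -/
theorem refined_stratification_variance_le
    {Ω Ω' : Type*} [MeasurableSpace Ω] [MeasurableSpace Ω']
    (P : Measure Ω) [IsProbabilityMeasure P]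
    (P' : Measure Ω') [IsProbabilityMeasure P']
    (A : Set Ω) (hA : MeasurableSet A) (hApos : 0 < P A)
    (N : ℕ) (hN : 0 < N)
    (As : Fin N → Set Ω) (hAsMeas : ∀ k, MeasurableSet (As k))
    (hAsDisj : Pairwise (Function.onFun Disjoint As))
    (hAsUnion : (⋃ k, As k) = A)
    (hAsProb : ∀ k, P (As k) = P A / (N : ℝ≥0∞))
    (g : Ω → ℝ)
    (hgA : MemLp g 2 (P[|A])) (hgAs : ∀ k, MemLp g 2 (P[|As k]))
    (ξ η : Fin N → Ω' → Ω)
    (hξMeas : ∀ j, Measurable (ξ j)) (hηMeas : ∀ k, Measurable (η k))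
    (hξLaw : ∀ j, Measure.map (ξ j) P' = P[|A])
    (hηLaw : ∀ k, Measure.map (η k) P' = P[|As k])
    (hξIndep : iIndepFun ξ P')
    (hηIndep : iIndepFun η P') :
    variance (fun ω => (P A).toReal / (N : ℝ) * ∑ k, g (η k ω)) P' ≤
      variance (fun ω => (P A).toReal / (N : ℝ) * ∑ j, g (ξ j ω)) P' :=
  refined_stratification_variance_le_general P P' A hApos N hN As hAsMeas hAsDisj hAsUnion hAsProb g
    hgA hgAs ξ η hξMeas hηMeas hξLaw hηLaw hξIndep hηIndep
end

section
/- Let (Ω, 𝓕, P) be a probability space and A₁, …, A_N a measurable partition of Ω into N strata of equal probability P(A_k) = 1/N, and let g : Ω → ℝ be square-integrable with respect to P. Let X₁, …, X_N be independent random variables with X_k having law P(·|A_k), and let T_S = (1/N) Σ_{k=1}^N g(X_k) be the balanced stratified estimator with one sample per stratum. Then Var[T_S] = Var_P(g)/N − (1/N) Σ_{k=1}^N (1/N) · ( μ_k − τ )², where μ_k = E_{P(·|A_k)}[g] is the conditional mean of g on stratum A_k and τ = E_P[g]; i.e., the stratified estimator's variance equals the simple-random-sampling variance σ²/N minus the nonnegative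 term (1/N) Σ_k p_k (μ_k − τ)². -/
open MeasureTheory ProbabilityTheory
open scoped ENNReal ProbabilityTheory

/-! By independence, `Var[T_S] = N⁻² ∑ₖ Var_{P[|A k]} g`. The law of total variance over the
partition, `Var_P g = ∑ₖ P(A k) (Var_{P[|A k]} g + (μₖ - τ)²)`, comes from splitting
`∫ (g - τ)² dP` into the strata and using `E_Q[(g - c)²] = Var_Q g + (E_Q g - c)²` on each; with
`P(A k) = 1/N` the identity is then linear algebra. -/

namespace ProbabilityTheory

variable {Ω : Type*} [MeasurableSpace Ω] {μ : Measure Ω}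

lemma _root_.MeasureTheory.MemLp.cond {E : Type*} [NormedAddCommGroup E] {f : Ω → E} {p : ℝ≥0∞}
    (hf : MemLp f p μ) (s : Set Ω) : MemLp f p μ[|s] := by
  by_cases hs : μ s = 0
  · simp [cond_eq_zero_of_meas_eq_zero hs]
  · exact (hf.restrict s).smul_measure (ENNReal.inv_ne_top.2 hs)

lemma measureReal_smul_integral_cond {E : Type*} [NormedAddCommGroup E] [NormedSpace ℝ E]
    [IsFiniteMeasure μ] (s : Set Ω) (f : Ω → E) :
    μ.real s • ∫ x, f x ∂μ[|s] = ∫ x in s, f x ∂μ := by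
  by_cases hs : μ s = 0
  · simp [Measure.restrict_eq_zero.2 hs, cond_eq_zero_of_meas_eq_zero hs]
  · rw [cond, integral_smul_measure, smul_smul, ENNReal.toReal_inv, measureReal_def,
      mul_inv_cancel₀ (ENNReal.toReal_ne_zero.2 ⟨hs, measure_ne_top μ s⟩), one_smul]

lemma integral_sub_sq_eq_variance_add [IsProbabilityMeasure μ] {g : Ω → ℝ} (hg : MemLp g 2 μ)
    (c : ℝ) : ∫ x, (g x - c) ^ 2 ∂μ = variance g μ + (∫ x, g x ∂μ - c) ^ 2 := by
  have hgc : MemLp (fun x => g x - c) 2 μ := hg.sub (memLp_const c)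
  rw [← variance_sub_const hg.aestronglyMeasurable c, variance_eq_sub hgc,
    integral_sub (hg.integrable one_le_two) (integrable_const c)]
  simp

section Partition

variable {ι : Type*} [Fintype ι] {A : ι → Set Ω}

lemma integral_eq_sum_measureReal_mul_integral_cond [IsFiniteMeasure μ]
    (hA : ∀ k, MeasurableSet (A k)) (hdisj : Pairwise (Function.onFun Disjoint A))
    (hcover : ⋃ k, A k = Set.univ) {f : Ω → ℝ} (hf : Integrable f μ) :
    ∫ x, f x ∂μ = ∑ k, μ.real (A k) * ∫ x, f x ∂μ[|A k] := by
  simp_rw [← smul_eq_mul, measureReal_smul_integral_cond, ← integral_iUnion_fintype hA hdisj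
    (fun _ => hf.integrableOn), hcover, setIntegral_univ]

theorem variance_eq_sum_measureReal_mul_variance_cond_add [IsProbabilityMeasure μ]
    (hA : ∀ k, MeasurableSet (A k)) (hdisj : Pairwise (Function.onFun Disjoint A))
    (hcover : ⋃ k, A k = Set.univ) {g : Ω → ℝ} (hg : MemLp g 2 μ) :
    variance g μ = ∑ k, μ.real (A k) *
      (variance g μ[|A k] + (∫ x, g x ∂μ[|A k] - ∫ x, g x ∂μ) ^ 2) := by
  have hgc : MemLp (fun x => g x - ∫ x, g x ∂μ) 2 μ := hg.sub (memLp_const _)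
  rw [variance_eq_integral hg.aemeasurable,
    integral_eq_sum_measureReal_mul_integral_cond hA hdisj hcover hgc.integrable_sq]
  refine Finset.sum_congr rfl fun k _ => ?_
  by_cases hk : μ (A k) = 0
  · simp [measureReal_def, hk]
  · have := cond_isProbabilityMeasure (μ := μ) hk
    rw [integral_sub_sq_eq_variance_add (hg.cond _)]

end Partition

lemma iIndepFun.variance_sum_comp_s7 {Ω' ι : Type*} [MeasurableSpace Ω'] [Fintype ι]
    {μ : Measure Ω'} {X : ι → Ω' → Ω} (hX : iIndepFun X μ) (hXm : ∀ k, AEMeasurable (X k) μ)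
    {g : Ω → ℝ} (hg : ∀ k, MemLp g 2 (μ.map (X k))) :
    variance (fun ω => ∑ k, g (X k ω)) μ = ∑ k, variance g (μ.map (X k)) := by
  have hindep : iIndepFun (fun k => g ∘ X k) μ :=
    hX.comp₀ _ hXm fun k => (hg k).aestronglyMeasurable.aemeasurable
  have hsum : (fun ω => ∑ k, g (X k ω)) = ∑ k, g ∘ X k := by
    ext ω; simp
  rw [hsum, IndepFun.variance_sum (fun k _ => (hg k).comp_of_map (hXm k))
    fun i _ j _ hij => hindep.indepFun hij]
  exact Finset.sum_congr rfl fun k _ =>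
    (variance_map (hg k).aestronglyMeasurable.aemeasurable (hXm k)).symm

end ProbabilityTheory

theorem balanced_stratified_sampling_variance_identity_general
    {Ω Ω' : Type*} [MeasurableSpace Ω] [MeasurableSpace Ω']
    (P : Measure Ω) [IsProbabilityMeasure P]
    (P' : Measure Ω')
    (N : ℕ)
    (A : Fin N → Set Ω) (hAMeas : ∀ k, MeasurableSet (A k))
    (hADisj : Pairwise (Function.onFun Disjoint A))
    (hAUnion : (⋃ k, A k) = Set.univ)
    (hAProb : ∀ k, P (A k) = 1 / (N : ℝ≥0∞))
    (g : Ω → ℝ) (hg : MemLp g 2 P)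
    (X : Fin N → Ω' → Ω)
    (hXMeas : ∀ k, Measurable (X k))
    (hXLaw : ∀ k, Measure.map (X k) P' = P[|A k])
    (hXIndep : iIndepFun X P') :
    variance (fun ω => (1 / (N : ℝ)) * ∑ k, g (X k ω)) P' =
      variance g P / (N : ℝ) -
        (1 / (N : ℝ)) * ∑ k, (1 / (N : ℝ)) *
          ((∫ ω, g ω ∂(P[|A k])) - ∫ ω, g ω ∂P) ^ 2 := by
  have hweight : ∀ k, P.real (A k) = 1 / (N : ℝ) := fun k => by
    simp [measureReal_def, hAProb]
  have htotal := variance_eq_sum_measureReal_mul_variance_cond_add hAMeas hADisj hAUnion hg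
  have hestimator := hXIndep.variance_sum_comp_s7 (fun k => (hXMeas k).aemeasurable)
    fun k => hXLaw k ▸ hg.cond (A k)
  simp only [hweight] at htotal
  simp only [hXLaw] at hestimator
  rw [variance_const_mul, hestimator, htotal]
  simp only [mul_add, Finset.sum_add_distrib, ← Finset.mul_sum]
  ring

/-- **McKay–Beckman–Conover variance reduction identity (Eq. 8).**
If `Ω` is partitioned into `N` measurable strata `A k` of equal probability `1/N`,
`g` is square-integrable with respect to `P`, and `X k` are independent with `X k`
having law `P[|A k]`, then the balanced stratified estimator
`T_S = (1/N) ∑ k g(X k)` satisfies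
`Var[T_S] = Var_P(g)/N - (1/N) ∑ k (1/N) (μ_k - τ)²`,
where `μ_k = E_{P[|A k]}[g]` and `τ = E_P[g]`. -/
theorem balanced_stratified_sampling_variance_identity
    {Ω Ω' : Type*} [MeasurableSpace Ω] [MeasurableSpace Ω']
    (P : Measure Ω) [IsProbabilityMeasure P]
    (P' : Measure Ω') [IsProbabilityMeasure P']
    (N : ℕ) (hN : 0 < N)
    (A : Fin N → Set Ω) (hAMeas : ∀ k, MeasurableSet (A k))
    (hADisj : Pairwise (Function.onFun Disjoint A))
    (hAUnion : (⋃ k, A k) = Set.univ)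
    (hAProb : ∀ k, P (A k) = 1 / (N : ℝ≥0∞))
    (g : Ω → ℝ) (hg : MemLp g 2 P)
    (X : Fin N → Ω' → Ω)
    (hXMeas : ∀ k, Measurable (X k))
    (hXLaw : ∀ k, Measure.map (X k) P' = P[|A k])
    (hXIndep : iIndepFun X P') :
    variance (fun ω => (1 / (N : ℝ)) * ∑ k, g (X k ω)) P' =
      variance g P / (N : ℝ) -
        (1 / (N : ℝ)) * ∑ k, (1 / (N : ℝ)) *
          ((∫ ω, g ω ∂(P[|A k])) - ∫ ω, g ω ∂P) ^ 2 :=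
  balanced_stratified_sampling_variance_identity_general P P' N A hAMeas hADisj hAUnion hAProb g hg
    X hXMeas hXLaw hXIndep
end
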